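/- arXiv:0710.0919 — 3 statements merged into one kernel-verified Lean document; each statement's English description precedes it below -/
import Mathlib

section
/- Let V be a 2-dimensional real vector space with a nondegenerate symmetric bilinear form g. If A ∈ ⊗³V* is trace-free in every pair of indices, skew-symmetric in its last two indices (A_{ijk} = −A_{ikj}), and satisfies A_{[ijk]} = 0, then A = 0. -/
open Finset

/-- In dimension 2, if `A ∈ ⊗³V*` is trace-free in every pair of
indices (with respect to a nondegenerate symmetric bilinear form `g`), is
skew-symmetric in its last two indices, and has vanishing full
skew-symmetrization `A_{[ijk]} = 0`, then `A = 0`. -/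
theorem tracefree_cotton_like_tensor_dim2_vanishes
    (g : Matrix (Fin 2) (Fin 2) ℝ) (hgsymm : g.IsSymm) (hgdet : IsUnit g.det)
    (A : Fin 2 → Fin 2 → Fin 2 → ℝ)
    (htr12 : ∀ k, ∑ i, ∑ j, g⁻¹ i j * A i j k = 0)
    (htr13 : ∀ k, ∑ i, ∑ j, g⁻¹ i j * A i k j = 0)
    (htr23 : ∀ k, ∑ i, ∑ j, g⁻¹ i j * A k i j = 0)
    (hskew : ∀ i j k, A i j k = - A i k j)
    (halt : ∀ i j k, A i j k - A j i k + A j k i - A k j i + A k i j - A i k j = 0) :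
    A = 0 := by
  -- diagonal (in last two indices) entries vanish
  have hdiag : ∀ i j, A i j j = 0 := fun i j => by have := hskew i j j; linarith
  set h := g⁻¹ with hh
  -- det of g⁻¹ is nonzero
  have hdet : h.det ≠ 0 := by
    rw [hh, Matrix.det_nonsing_inv, Ring.inverse_eq_inv']
    exact inv_ne_zero hgdet.ne_zero
  have hdet2 : h 0 0 * h 1 1 - h 0 1 * h 1 0 ≠ 0 := by
    rwa [Matrix.det_fin_two] at hdet
  -- the two trace equations
  have e1 := htr12 1
  have e0 := htr12 0
  simp only [Fin.sum_univ_two] at e1 e0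
  have d1 := hdiag 0 1
  have d2 := hdiag 1 1
  have d3 := hdiag 0 0
  have d4 := hdiag 1 0
  have s1 := hskew 0 1 0
  have s2 := hskew 1 1 0
  simp only [d1, d2, d3, d4, s1, s2] at e1 e0
  have c1 : h 0 0 * A 0 0 1 + h 1 0 * A 1 0 1 = 0 := by linarith
  have c0 : h 0 1 * A 0 0 1 + h 1 1 * A 1 0 1 = 0 := by
    have : h 0 0 * 0 + h 0 1 * -A 0 0 1 + (h 1 0 * 0 + h 1 1 * -A 1 0 1) = 0 := e0
    linarith
  have hB0 : A 0 0 1 = 0 := by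
    have : (h 0 0 * h 1 1 - h 0 1 * h 1 0) * A 0 0 1 = 0 := by
      linear_combination h 1 1 * c1 - h 1 0 * c0
    exact (mul_eq_zero.mp this).resolve_left hdet2
  have hB1 : A 1 0 1 = 0 := by
    have : (h 0 0 * h 1 1 - h 0 1 * h 1 0) * A 1 0 1 = 0 := by
      linear_combination h 0 0 * c0 - h 0 1 * c1
    exact (mul_eq_zero.mp this).resolve_left hdet2
  funext i j k
  have hskew' : ∀ i, A i 1 0 = - A i 0 1 := fun i => hskew i 1 0
  fin_cases i <;> fin_cases j <;> fin_cases k <;>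
    simp [hB0, hB1, s1, s2, d1, d2, d3, d4]
end

section
/- With P ⊂ O(h̃) the subgroup of elements fixing e₀ up to a positive scalar (as in the block description), every p ∈ P factors uniquely as p = p_a · p_b · p_m, where p_a = diag(a, Id, a^{-1}) with a > 0, p_b is the element with a = 1 and m = Id determined by a covector b ∈ (ℝⁿ)*, and p_m = diag(1, m, 1) with m ∈ O(h). -/
open Finset

/-- The quadratic form `h̃` on `ℝ^{n+2}` with block matrix
`[[0,0,1],[0,h,0],[1,0,0]]`. -/
def htMat (n : ℕ) (h : Matrix (Fin n) (Fin n) ℝ) :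
    Matrix (Unit ⊕ Fin n ⊕ Unit) (Unit ⊕ Fin n ⊕ Unit) ℝ :=
  fun I J =>
    match I, J with
    | Sum.inl _, Sum.inr (Sum.inr _) => 1
    | Sum.inr (Sum.inr _), Sum.inl _ => 1
    | Sum.inr (Sum.inl i), Sum.inr (Sum.inl j) => h i j
    | _, _ => 0

/-- The element `p_a = diag(a, Id, a⁻¹)`. -/
noncomputable def paMat (n : ℕ) (a : ℝ) :
    Matrix (Unit ⊕ Fin n ⊕ Unit) (Unit ⊕ Fin n ⊕ Unit) ℝ :=
  fun I J =>
    match I, J with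
    | Sum.inl _, Sum.inl _ => a
    | Sum.inr (Sum.inl i), Sum.inr (Sum.inl j) => if i = j then 1 else 0
    | Sum.inr (Sum.inr _), Sum.inr (Sum.inr _) => a⁻¹
    | _, _ => 0

/-- The element `p_b` determined by a covector `b` (with `a = 1`, `m = Id`):
`[[1, b_j, −(1/2)b_jb^j],[0, Id, −b^i],[0,0,1]]`. -/
noncomputable def pbMat (n : ℕ) (h : Matrix (Fin n) (Fin n) ℝ) (b : Fin n → ℝ) :
    Matrix (Unit ⊕ Fin n ⊕ Unit) (Unit ⊕ Fin n ⊕ Unit) ℝ :=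
  fun I J =>
    match I, J with
    | Sum.inl _, Sum.inl _ => 1
    | Sum.inl _, Sum.inr (Sum.inl j) => b j
    | Sum.inl _, Sum.inr (Sum.inr _) => -(1/2) * ∑ j, ∑ k, h⁻¹ j k * b j * b k
    | Sum.inr (Sum.inl i), Sum.inr (Sum.inl j) => if i = j then 1 else 0
    | Sum.inr (Sum.inl i), Sum.inr (Sum.inr _) => -(∑ j, h⁻¹ i j * b j)
    | Sum.inr (Sum.inr _), Sum.inr (Sum.inr _) => 1
    | _, _ => 0

/-- The element `p_m = diag(1, m, 1)` for `m ∈ O(h)`. -/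
def pmMat (n : ℕ) (m : Matrix (Fin n) (Fin n) ℝ) :
    Matrix (Unit ⊕ Fin n ⊕ Unit) (Unit ⊕ Fin n ⊕ Unit) ℝ :=
  fun I J =>
    match I, J with
    | Sum.inl _, Sum.inl _ => 1
    | Sum.inr (Sum.inl i), Sum.inr (Sum.inl j) => m i j
    | Sum.inr (Sum.inr _), Sum.inr (Sum.inr _) => 1
    | _, _ => 0

/-- The basis vector `e₀`. -/
def e0vec (n : ℕ) : Unit ⊕ Fin n ⊕ Unit → ℝ :=
  fun I => match I with | Sum.inl _ => 1 | _ => 0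

/-- Auxiliary: the explicit form of the triple product `p_a * p_b * p_m`. -/
noncomputable def tripleMat (n : ℕ) (h : Matrix (Fin n) (Fin n) ℝ) (a : ℝ) (b : Fin n → ℝ)
    (m : Matrix (Fin n) (Fin n) ℝ) :
    Matrix (Unit ⊕ Fin n ⊕ Unit) (Unit ⊕ Fin n ⊕ Unit) ℝ :=
  fun I J =>
    match I, J with
    | Sum.inl _, Sum.inl _ => a
    | Sum.inl _, Sum.inr (Sum.inl j) => a * ∑ k, b k * m k j
    | Sum.inl _, Sum.inr (Sum.inr _) => a * (-(1/2) * ∑ j, ∑ k, h⁻¹ j k * b j * b k)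
    | Sum.inr (Sum.inl i), Sum.inr (Sum.inl j) => m i j
    | Sum.inr (Sum.inl i), Sum.inr (Sum.inr _) => -(∑ j, h⁻¹ i j * b j)
    | Sum.inr (Sum.inr _), Sum.inr (Sum.inr _) => a⁻¹
    | _, _ => 0

set_option linter.unnecessarySeqFocus false in
lemma triple_eq (n : ℕ) (h : Matrix (Fin n) (Fin n) ℝ) (a : ℝ) (b : Fin n → ℝ)
    (m : Matrix (Fin n) (Fin n) ℝ) :
    paMat n a * pbMat n h b * pmMat n m = tripleMat n h a b m := by
  funext I J
  rcases I with u | i | u <;> rcases J with v | j | v <;>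
    simp [Matrix.mul_apply, Fintype.sum_sum_type, paMat, pbMat, pmMat, tripleMat,
      Finset.mul_sum, Finset.sum_mul] <;>
    exact Finset.sum_congr rfl fun x _ => by ring

/-- Every element `A` of the parabolic subgroup
`P = {A ∈ O(h̃) : A e₀ = a e₀, a > 0}` factors uniquely as
`A = p_a · p_b · p_m` with `a > 0`, `b ∈ (ℝⁿ)*` and `m ∈ O(h)`. -/
theorem parabolic_unique_factorization
    (n : ℕ) (h : Matrix (Fin n) (Fin n) ℝ) (hhsymm : h.IsSymm) (hhdet : IsUnit h.det)
    (A : Matrix (Unit ⊕ Fin n ⊕ Unit) (Unit ⊕ Fin n ⊕ Unit) ℝ)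
    (hA : A.transpose * htMat n h * A = htMat n h)
    (hP : ∃ a : ℝ, 0 < a ∧
      A.mulVec (e0vec n) = a • e0vec n) :
    ∃! t : ℝ × (Fin n → ℝ) × Matrix (Fin n) (Fin n) ℝ,
      0 < t.1 ∧ (t.2.2).transpose * h * t.2.2 = h ∧
      A = paMat n t.1 * pbMat n h t.2.1 * pmMat n t.2.2 := by
  obtain ⟨a, ha, hAe⟩ := hP
  have ha0 : a ≠ 0 := ne_of_gt ha
  -- first column of A
  have h00 : A (Sum.inl ()) (Sum.inl ()) = a := by
    have := congrFun hAe (Sum.inl ())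
    simpa [Matrix.mulVec, dotProduct, Fintype.sum_sum_type, e0vec, dotProduct] using this
  have hm0 : ∀ i, A (Sum.inr (Sum.inl i)) (Sum.inl ()) = 0 := by
    intro i
    have := congrFun hAe (Sum.inr (Sum.inl i))
    simpa [Matrix.mulVec, dotProduct, Fintype.sum_sum_type, e0vec, dotProduct] using this
  have hr0 : A (Sum.inr (Sum.inr ())) (Sum.inl ()) = 0 := by
    have := congrFun hAe (Sum.inr (Sum.inr ()))
    simpa [Matrix.mulVec, dotProduct, Fintype.sum_sum_type, e0vec, dotProduct] using this
  -- the orthogonality relations, entrywise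
  have key : ∀ I J, A (Sum.inl ()) I * A (Sum.inr (Sum.inr ())) J
      + A (Sum.inr (Sum.inr ())) I * A (Sum.inl ()) J
      + ∑ i, ∑ j, h i j * A (Sum.inr (Sum.inl i)) I * A (Sum.inr (Sum.inl j)) J
      = htMat n h I J := by
    intro I J
    have := congrFun (congrFun hA I) J
    simp only [Matrix.mul_apply, Matrix.transpose_apply, Fintype.sum_sum_type, htMat,
      Finset.univ_unique, Finset.sum_singleton, mul_zero, zero_mul, mul_one, one_mul,
      Finset.sum_const_zero, add_zero, zero_add, Finset.sum_mul, Finset.mul_sum] at this ⊢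
    have hs : (∑ i, ∑ j, h i j * A (Sum.inr (Sum.inl i)) I * A (Sum.inr (Sum.inl j)) J)
        = ∑ x, ∑ i, A (Sum.inr (Sum.inl i)) I * h i x * A (Sum.inr (Sum.inl x)) J := by
      rw [Finset.sum_comm]
      exact Finset.sum_congr rfl fun j _ => Finset.sum_congr rfl fun i _ => by ring
    rw [hs]
    linarith [this]
  -- notation for the blocks of A
  set M : Matrix (Fin n) (Fin n) ℝ := fun i j => A (Sum.inr (Sum.inl i)) (Sum.inr (Sum.inl j))
    with hM
  set t : Fin n → ℝ := fun j => A (Sum.inl ()) (Sum.inr (Sum.inl j)) with ht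
  set d : Fin n → ℝ := fun i => A (Sum.inr (Sum.inl i)) (Sum.inr (Sum.inr ())) with hd
  -- bottom row
  have hu : ∀ j, A (Sum.inr (Sum.inr ())) (Sum.inr (Sum.inl j)) = 0 := by
    intro j
    have := key (Sum.inl ()) (Sum.inr (Sum.inl j))
    simp only [htMat, h00, hm0, hr0, mul_zero, zero_mul, add_zero, zero_add,
      Finset.sum_const_zero] at this
    exact (mul_eq_zero.mp this).resolve_left ha0
  have he : A (Sum.inr (Sum.inr ())) (Sum.inr (Sum.inr ())) = a⁻¹ := by
    have := key (Sum.inl ()) (Sum.inr (Sum.inr ()))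
    simp only [htMat, h00, hm0, hr0, mul_zero, zero_mul, add_zero, zero_add,
      Finset.sum_const_zero] at this
    field_simp
    linarith
  -- M is h-orthogonal
  have hMorth : M.transpose * h * M = h := by
    funext j k
    have hk := key (Sum.inr (Sum.inl j)) (Sum.inr (Sum.inl k))
    simp only [htMat, hu, mul_zero, zero_mul, add_zero, zero_add] at hk
    rw [Matrix.mul_apply]
    calc (∑ l, (M.transpose * h) j l * M l k)
        = ∑ l, ∑ i, M i j * h i l * M l k := by
          refine Finset.sum_congr rfl fun l _ => ?_
          rw [Matrix.mul_apply, Finset.sum_mul]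
          exact Finset.sum_congr rfl fun i _ => by simp [Matrix.transpose_apply]
      _ = ∑ i, ∑ l, h i l * M i j * M l k := by
          rw [Finset.sum_comm]
          exact Finset.sum_congr rfl fun i _ => Finset.sum_congr rfl fun l _ => by ring
      _ = h j k := hk
  -- M is invertible
  have hdet0 : h.det ≠ 0 := hhdet.ne_zero
  have hMdet : IsUnit M.det := by
    have : M.det * h.det * M.det = h.det := by
      have := congrArg Matrix.det hMorth
      simpa [Matrix.det_mul, Matrix.det_transpose] using this
    have h2 : M.det * M.det = 1 := by
      refine mul_right_cancel₀ hdet0 ?_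
      linear_combination this
    rw [isUnit_iff_ne_zero]
    intro h0
    rw [h0] at h2; simp at h2
  -- define b
  set b : Fin n → ℝ := a⁻¹ • Matrix.vecMul t M⁻¹ with hb
  -- b satisfies (b M) = a⁻¹ t
  have hbM : Matrix.vecMul b M = a⁻¹ • t := by
    rw [hb, Matrix.smul_vecMul, Matrix.vecMul_vecMul, Matrix.nonsing_inv_mul M hMdet,
      Matrix.vecMul_one]
  -- relation for d
  have hdvec : (M.transpose * h).mulVec d = -(a⁻¹ • t) := by
    funext j
    have hk := key (Sum.inr (Sum.inl j)) (Sum.inr (Sum.inr ()))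
    simp only [htMat, hu, he, mul_zero, zero_mul, add_zero, zero_add] at hk
    have : (M.transpose * h).mulVec d j = ∑ i, ∑ l, h i l * M i j * d l := by
      rw [Matrix.mulVec]
      calc (∑ l, (M.transpose * h) j l * d l)
          = ∑ l, ∑ i, M i j * h i l * d l := by
            refine Finset.sum_congr rfl fun l _ => ?_
            rw [Matrix.mul_apply, Finset.sum_mul]
            exact Finset.sum_congr rfl fun i _ => by simp [Matrix.transpose_apply]
        _ = ∑ i, ∑ l, h i l * M i j * d l := by
            rw [Finset.sum_comm]
            exact Finset.sum_congr rfl fun i _ => Finset.sum_congr rfl fun l _ => by ring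
    rw [this]
    simp only [Pi.neg_apply, Pi.smul_apply, smul_eq_mul]
    linarith [hk]
  have hMhdet : IsUnit (M.transpose * h).det := by
    rw [Matrix.det_mul, Matrix.det_transpose]
    exact (hMdet.mul hhdet)
  have hdformula : d = -(h⁻¹.mulVec b) := by
    have h1 : d = (M.transpose * h)⁻¹.mulVec (-(a⁻¹ • t)) := by
      rw [← hdvec, Matrix.mulVec_mulVec, Matrix.nonsing_inv_mul _ hMhdet, Matrix.one_mulVec]
    have hvm : Matrix.vecMul t M⁻¹ = (M⁻¹).transpose.mulVec t := by
      funext k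
      rw [Matrix.vecMul, Matrix.mulVec]
      exact Finset.sum_congr rfl fun i _ => by simp [Matrix.transpose_apply, mul_comm]
    rw [h1, hb, Matrix.mul_inv_rev, hvm, Matrix.transpose_nonsing_inv,
      Matrix.mulVec_neg, Matrix.mulVec_smul, Matrix.mulVec_smul, Matrix.mulVec_mulVec]
  -- relation for c
  have hsum_d : ∀ i : Fin n, (∑ j, h⁻¹ i j * b j) = h⁻¹.mulVec b i := by
    intro i; rfl
  have hc : A (Sum.inl ()) (Sum.inr (Sum.inr ()))
      = a * (-(1/2) * ∑ j, ∑ k, h⁻¹ j k * b j * b k) := by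
    have hk := key (Sum.inr (Sum.inr ())) (Sum.inr (Sum.inr ()))
    simp only [htMat, he] at hk
    -- hk : c * a⁻¹ + a⁻¹ * c + ∑ i, ∑ l, h i l * d i * d l = 0
    have hS : (∑ i, ∑ l, h i l * d i * d l) = ∑ j, ∑ k, h⁻¹ j k * b j * b k := by
      have hhd : h.mulVec d = -b := by
        rw [hdformula, Matrix.mulVec_neg, Matrix.mulVec_mulVec,
          Matrix.mul_nonsing_inv h hhdet, Matrix.one_mulVec]
      calc (∑ i, ∑ l, h i l * d i * d l)
          = ∑ i, d i * h.mulVec d i := by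
            refine Finset.sum_congr rfl fun i _ => ?_
            show _ = d i * ∑ l, h i l * d l
            rw [Finset.mul_sum]
            exact Finset.sum_congr rfl fun l _ => by ring
        _ = ∑ i, d i * (-b) i := by rw [hhd]
        _ = ∑ i, (h⁻¹.mulVec b) i * b i := by
            refine Finset.sum_congr rfl fun i _ => ?_
            rw [hdformula]
            simp only [Pi.neg_apply]
            ring
        _ = ∑ j, ∑ k, h⁻¹ j k * b j * b k := by
            refine Finset.sum_congr rfl fun j _ => ?_
            show (∑ k, h⁻¹ j k * b k) * b j = _
            rw [Finset.sum_mul]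
            exact Finset.sum_congr rfl fun k _ => by ring
    rw [hS] at hk
    linear_combination (a/2) * hk - A (Sum.inl ()) (Sum.inr (Sum.inr ())) * (mul_inv_cancel₀ ha0)
  -- the factorization
  refine ⟨⟨a, b, M⟩, ⟨ha, hMorth, ?_⟩, ?_⟩
  · rw [triple_eq]
    funext I J
    rcases I with u | i | u <;> rcases J with v | j | v
    · exact h00
    · show t j = a * ∑ k, b k * M k j
      have h2 := congrFun hbM j
      simp only [Pi.smul_apply, smul_eq_mul] at h2
      rw [show (∑ k, b k * M k j) = a⁻¹ * t j from h2]
      field_simp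
    · exact hc
    · exact hm0 i
    · rfl
    · show d i = -(∑ j, h⁻¹ i j * b j)
      have h2 := congrFun hdformula i
      simp only [Pi.neg_apply] at h2
      rw [h2, hsum_d]
    · exact hr0
    · exact hu j
    · exact he
  · rintro ⟨a', b', M'⟩ ⟨ha', hM'orth, hfac⟩
    rw [triple_eq] at hfac
    have ea : a' = a := by
      have h2 := congrFun (congrFun hfac (Sum.inl ())) (Sum.inl ())
      rw [h00] at h2
      exact h2.symm
    have eM : M' = M := by
      funext i j
      exact (congrFun (congrFun hfac (Sum.inr (Sum.inl i))) (Sum.inr (Sum.inl j))).symm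
    have eb : b' = b := by
      have hrow : ∀ j, t j = a * (Matrix.vecMul b' M) j := by
        intro j
        have h2 := congrFun (congrFun hfac (Sum.inl ())) (Sum.inr (Sum.inl j))
        rw [ea, eM] at h2
        exact h2
      have hvm : Matrix.vecMul b' M = a⁻¹ • t := by
        funext j
        have := hrow j
        simp only [Pi.smul_apply, smul_eq_mul]
        field_simp
        linarith [this]
      have : Matrix.vecMul (Matrix.vecMul b' M) M⁻¹ = Matrix.vecMul (a⁻¹ • t) M⁻¹ := by
        rw [hvm]
      rw [Matrix.vecMul_vecMul, Matrix.mul_nonsing_inv M hMdet, Matrix.vecMul_one] at this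
      rw [this, hb, Matrix.smul_vecMul]
    simp only [Prod.mk.injEq]
    exact ⟨ea, eb, eM⟩
end

section
/- Fix a real number n and a positive integer k. Define polynomials q_m(y) for m = −1, 0, 1, …, k by q_{−1} = 0, q_0 = 1, and the recursion q_{m+1} = [y − 2m(k−m−n/2) − n(k−1)/2]·q_m − m(m−k)(m−1+n/2)(m−1+n/2−k)·q_{m−1}. Then q_k(y) = ∏_{j=1}^k (y − j(j−1)). -/
open Finset

/-!
Expand `q_m` in the basis `P_i(y) = ∏_{j=1}^i (y - j(j-1))`. Since `y P_i = P_{i+1} + i(i+1) P_i`,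
the recursion for `q_m` becomes a recursion for the coefficients, and it is solved by
`C(m, i) = binom(m, i) ∏_{i ≤ j < m} (j + n/2)(j + 1 - k)`. At `m = k` every coefficient with
`i < k` contains the factor `j = k - 1`, which vanishes, so `q_k = P_k`.
-/

theorem eq_of_three_term_recurrence {R : Type*} [Ring R] {f g : ℕ → R} (α β : ℕ → R) {k : ℕ}
    (h0 : f 0 = g 0)
    (hf : ∀ m < k, f (m + 1) = α m * f m - β m * f (m - 1))
    (hg : ∀ m < k, g (m + 1) = α m * g m - β m * g (m - 1)) :
    ∀ m ≤ k, f m = g m := by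
  intro m
  induction m using Nat.strong_induction_on with
  | _ m ih =>
    intro hm
    cases m with
    | zero => exact h0
    | succ m =>
      rw [hf m hm, hg m hm, ih m (by omega) (by omega), ih (m - 1) (by omega) (by omega)]

namespace GJMSRecursion

def basisPoly (i : ℕ) (y : ℝ) : ℝ :=
  ∏ j ∈ Icc 1 i, (y - (j : ℝ) * ((j : ℝ) - 1))

theorem basisPoly_succ (i : ℕ) (y : ℝ) :
    basisPoly (i + 1) y = (y - ((i : ℝ) + 1) * i) * basisPoly i y := by
  rw [basisPoly, basisPoly, prod_Icc_succ_top (by omega), mul_comm]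
  push_cast
  ring

variable (n : ℝ) (k : ℕ)

noncomputable def coeffFactor (j : ℕ) : ℝ := ((j : ℝ) + n / 2) * ((j : ℝ) + 1 - k)

noncomputable def coeff (m i : ℕ) : ℝ := (m.choose i : ℝ) * ∏ j ∈ Ico i m, coeffFactor n k j

noncomputable def expansion (m : ℕ) (y : ℝ) : ℝ := ∑ i ∈ range (m + 1), coeff n k m i * basisPoly i y

theorem coeff_self (m : ℕ) : coeff n k m m = 1 := by
  simp [coeff]

theorem coeff_of_lt {m i : ℕ} (h : m < i) : coeff n k m i = 0 := by
  simp [coeff, Nat.choose_eq_zero_of_lt h]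

theorem coeff_of_lt_top {i : ℕ} (hi : i < k) : coeff n k k i = 0 := by
  refine mul_eq_zero_of_right _ (prod_eq_zero (i := k - 1) (mem_Ico.2 (by omega)) ?_)
  rw [coeffFactor, Nat.cast_sub (by omega)]
  ring

theorem coeff_succ_mul_sub (m i : ℕ) :
    coeff n k (m + 1) i * ((m : ℝ) + 1 - i)
      = ((m : ℝ) + 1) * coeffFactor n k m * coeff n k m i := by
  rcases lt_trichotomy i (m + 1) with hi | rfl | hi
  · have hchoose := Nat.choose_mul_succ_eq m i
    rw [Nat.sub_add_comm (by omega), ← Nat.cast_inj (R := ℝ)] at hchoose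
    push_cast [Nat.cast_sub (by omega : i ≤ m)] at hchoose
    rw [coeff, coeff, prod_Ico_succ_top (by omega)]
    linear_combination -(∏ j ∈ Ico i m, coeffFactor n k j) * coeffFactor n k m * hchoose
  · rw [coeff_of_lt n k (by omega : m < m + 1)]
    push_cast
    ring
  · rw [coeff_of_lt n k hi, coeff_of_lt n k (by omega : m < i)]
    ring

theorem coeff_mul_sub (m i : ℕ) :
    coeff n k m i * ((m : ℝ) - i)
      = ((i : ℝ) + 1) * coeffFactor n k i * coeff n k m (i + 1) := by
  rcases lt_trichotomy i m with hi | rfl | hi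
  · have hchoose := Nat.choose_succ_right_eq m i
    rw [← Nat.cast_inj (R := ℝ)] at hchoose
    push_cast [Nat.cast_sub hi.le] at hchoose
    rw [coeff, coeff, prod_eq_prod_Ico_succ_bot hi]
    linear_combination (-(coeffFactor n k i * ∏ j ∈ Ico (i + 1) m, coeffFactor n k j)) * hchoose
  · rw [coeff_of_lt n k (by omega : i < i + 1)]
    ring
  · rw [coeff_of_lt n k hi, coeff_of_lt n k (by omega : m < i + 1)]
    ring

theorem coeff_succ_zero (m : ℕ) :
    coeff n k (m + 1) 0
      = -(2 * (m : ℝ) * ((k : ℝ) - (m : ℝ) - n/2) + n * ((k : ℝ) - 1)/2) * coeff n k m 0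
        - (m : ℝ) * ((m : ℝ) - (k : ℝ)) * ((m : ℝ) - 1 + n/2)
            * ((m : ℝ) - 1 + n/2 - (k : ℝ)) * coeff n k (m - 1) 0 := by
  cases m with
  | zero => simp [coeff, coeffFactor]; ring
  | succ d =>
    simp only [coeff, Nat.choose_zero_right, Nat.Ico_zero_eq_range, prod_range_succ,
      coeffFactor, Nat.add_sub_cancel]
    push_cast
    ring

theorem coeff_succ_succ (m i : ℕ) :
    coeff n k (m + 1) (i + 1)
      = coeff n k m i
        + (((i : ℝ) + 1) * ((i : ℝ) + 2)
            - (2 * (m : ℝ) * ((k : ℝ) - (m : ℝ) - n/2) + n * ((k : ℝ) - 1)/2))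
          * coeff n k m (i + 1)
        - (m : ℝ) * ((m : ℝ) - (k : ℝ)) * ((m : ℝ) - 1 + n/2)
            * ((m : ℝ) - 1 + n/2 - (k : ℝ)) * coeff n k (m - 1) (i + 1) := by
  rcases lt_trichotomy i m with hi | rfl | hi
  · -- Multiplied by `m - i`, all four coefficients become multiples of `coeff m (i + 1)`.
    obtain ⟨m, rfl⟩ : ∃ m', m = m' + 1 := ⟨m - 1, by omega⟩
    have htop := coeff_succ_mul_sub n k (m + 1) (i + 1)
    have hbot := coeff_mul_sub n k (m + 1) i
    have hprev := coeff_succ_mul_sub n k m (i + 1)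
    have hmi : ((m + 1 : ℕ) : ℝ) - i ≠ 0 := sub_ne_zero.mpr (by exact_mod_cast hi.ne')
    apply mul_right_cancel₀ hmi
    simp only [coeffFactor, Nat.add_sub_cancel] at htop hbot hprev ⊢
    push_cast at htop hbot hprev ⊢
    linear_combination htop - hbot - ((m : ℝ) + n / 2 - k) * ((m : ℝ) + 1 - i) * hprev
  · rw [coeff_self, coeff_self, coeff_of_lt n k (by omega : i < i + 1),
      coeff_of_lt n k (by omega : i - 1 < i + 1)]
    ring
  · rw [coeff_of_lt n k (by omega : m + 1 < i + 1), coeff_of_lt n k hi,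
      coeff_of_lt n k (by omega : m < i + 1), coeff_of_lt n k (by omega : m - 1 < i + 1)]
    ring

theorem expansion_eq_sum_range {m N : ℕ} (hN : m < N) (y : ℝ) :
    expansion n k m y = ∑ i ∈ range N, coeff n k m i * basisPoly i y :=
  sum_subset (range_subset_range.2 hN) fun i _ hi => by
    rw [coeff_of_lt n k (not_lt.1 (mem_range.not.1 hi)), zero_mul]

theorem expansion_zero (y : ℝ) : expansion n k 0 y = 1 := by
  simp [expansion, coeff_self, basisPoly]

theorem expansion_succ (m : ℕ) (y : ℝ) :
    expansion n k (m + 1) y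
      = (y - 2 * (m : ℝ) * ((k : ℝ) - (m : ℝ) - n/2) - n * ((k : ℝ) - 1)/2) * expansion n k m y
        - (m : ℝ) * ((m : ℝ) - (k : ℝ)) * ((m : ℝ) - 1 + n/2)
            * ((m : ℝ) - 1 + n/2 - (k : ℝ)) * expansion n k (m - 1) y := by
  set b : ℝ := (m : ℝ) * ((m : ℝ) - (k : ℝ)) * ((m : ℝ) - 1 + n/2) * ((m : ℝ) - 1 + n/2 - (k : ℝ))
  set G : ℕ → ℝ := fun i =>
    ((i : ℝ) * ((i : ℝ) + 1) - (2 * (m : ℝ) * ((k : ℝ) - (m : ℝ) - n/2) + n * ((k : ℝ) - 1)/2))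
      * coeff n k m i - b * coeff n k (m - 1) i
  have hterm : ∀ i,
      (y - 2 * (m : ℝ) * ((k : ℝ) - (m : ℝ) - n/2) - n * ((k : ℝ) - 1)/2)
          * (coeff n k m i * basisPoly i y) - b * (coeff n k (m - 1) i * basisPoly i y)
        = coeff n k m i * basisPoly (i + 1) y + G i * basisPoly i y := fun i => by
    rw [basisPoly_succ]
    ring
  have hsucc : ∀ i, coeff n k (m + 1) (i + 1) = coeff n k m i + G (i + 1) := fun i => by
    rw [coeff_succ_succ]
    simp only [G, b]
    push_cast
    ring
  rw [expansion, expansion_eq_sum_range n k (by omega : m < m + 2),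
    expansion_eq_sum_range n k (by omega : m - 1 < m + 2), mul_sum, mul_sum, ← sum_sub_distrib,
    sum_congr rfl fun i _ => hterm i, sum_add_distrib,
    sum_range_succ (fun i => coeff n k m i * basisPoly (i + 1) y),
    coeff_of_lt n k (by omega : m < m + 1), sum_range_succ' (fun i => G i * basisPoly i y),
    sum_range_succ' (fun i => coeff n k (m + 1) i * basisPoly i y), coeff_succ_zero]
  simp only [hsucc, add_mul, sum_add_distrib, G, b]
  ring

theorem expansion_self (y : ℝ) : expansion n k k y = basisPoly k y := by
  rw [expansion, sum_range_succ, coeff_self, one_mul, add_eq_right]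
  exact sum_eq_zero fun i hi => by rw [coeff_of_lt_top n k (mem_range.1 hi), zero_mul]

end GJMSRecursion

theorem gjms_recursion_product_formula_general
    (n : ℝ) (k : ℕ)
    (q : ℕ → ℝ → ℝ)
    (hq0 : ∀ y, q 0 y = 1)
    (hrec : ∀ m : ℕ, m < k → ∀ y : ℝ,
      q (m + 1) y
        = (y - 2 * (m : ℝ) * ((k : ℝ) - (m : ℝ) - n/2) - n * ((k : ℝ) - 1)/2) * q m y
          - (m : ℝ) * ((m : ℝ) - (k : ℝ)) * ((m : ℝ) - 1 + n/2)
              * ((m : ℝ) - 1 + n/2 - (k : ℝ)) * q (m - 1) y) :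
    ∀ y : ℝ, q k y = ∏ j ∈ Finset.Icc 1 k, (y - (j : ℝ) * ((j : ℝ) - 1)) := by
  intro y
  have hq : q k y = GJMSRecursion.expansion n k k y :=
    eq_of_three_term_recurrence (f := fun m => q m y)
      (g := fun m => GJMSRecursion.expansion n k m y) _ _
      (by rw [hq0, GJMSRecursion.expansion_zero]) (fun m hm => hrec m hm y)
      (fun m _ => GJMSRecursion.expansion_succ n k m y) k le_rfl
  rw [hq, GJMSRecursion.expansion_self]
  rfl

/-- Fix `n ∈ ℝ` and a positive integer `k`.  If `q_m` satisfies
`q_{−1} = 0`, `q_0 = 1` and the recursion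
`q_{m+1} = [y − 2m(k−m−n/2) − n(k−1)/2] q_m − m(m−k)(m−1+n/2)(m−1+n/2−k) q_{m−1}`,
then `q_k(y) = ∏_{j=1}^k (y − j(j−1))`.  (The `q_{−1}` term is multiplied by the
coefficient `m`, which vanishes when `m = 0`, so it never contributes.) -/
theorem gjms_recursion_product_formula
    (n : ℝ) (k : ℕ) (hk : 1 ≤ k)
    (q : ℕ → ℝ → ℝ)
    (hq0 : ∀ y, q 0 y = 1)
    (hrec : ∀ m : ℕ, m < k → ∀ y : ℝ,
      q (m + 1) y
        = (y - 2 * (m : ℝ) * ((k : ℝ) - (m : ℝ) - n/2) - n * ((k : ℝ) - 1)/2) * q m y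
          - (m : ℝ) * ((m : ℝ) - (k : ℝ)) * ((m : ℝ) - 1 + n/2)
              * ((m : ℝ) - 1 + n/2 - (k : ℝ)) * q (m - 1) y) :
    ∀ y : ℝ, q k y = ∏ j ∈ Finset.Icc 1 k, (y - (j : ℝ) * ((j : ℝ) - 1)) :=
  gjms_recursion_product_formula_general n k q hq0 hrec
end
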